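/- arXiv:1509.08045 — 10 statements merged into one kernel-verified Lean document; each statement's English description precedes it below -/
import Mathlib

section
/- For parameters ξ_m > 0, μ ∈ [0, ξ_m], the function f(Δ) = sqrt(ξ_m² + Δ²) − sqrt(μ² + Δ²) + μ·log((μ + sqrt(μ² + Δ²))/Δ) is strictly decreasing in Δ on (0, ∞). -/
/-! The derivative collapses to `Δ / √(ξm² + Δ²) - √(μ² + Δ²) / Δ`: the logarithmic term
contributes `-μ² / (Δ √(μ² + Δ²))`, which combines with `-Δ / √(μ² + Δ²)` from the second square
root. The first summand is `< 1` because `ξm > 0`, the second is `≥ 1`. -/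

open Real Set

theorem hasDerivAt_sqrt_sq_add_sq (c : ℝ) {x : ℝ} (hx : x ≠ 0) :
    HasDerivAt (fun y : ℝ => √(c ^ 2 + y ^ 2)) (x / √(c ^ 2 + x ^ 2)) x := by
  have hpos : 0 < c ^ 2 + x ^ 2 := by positivity
  convert ((hasDerivAt_pow 2 x).const_add (c ^ 2)).sqrt hpos.ne' using 1
  field_simp
  ring

theorem hasDerivAt_log_add_sqrt_sq_add_sq_div (μ : ℝ) {x : ℝ} (hx : 0 < x) :
    HasDerivAt (fun y : ℝ => log ((μ + √(μ ^ 2 + y ^ 2)) / y))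
      (-μ / (x * √(μ ^ 2 + x ^ 2))) x := by
  have hs_sq : √(μ ^ 2 + x ^ 2) ^ 2 = μ ^ 2 + x ^ 2 := sq_sqrt (by positivity)
  have hs_pos : 0 < √(μ ^ 2 + x ^ 2) := sqrt_pos.2 (by positivity)
  have hμs : 0 < μ + √(μ ^ 2 + x ^ 2) := by nlinarith
  refine ((((hasDerivAt_sqrt_sq_add_sq μ hx.ne').const_add μ).div (hasDerivAt_id x)
    hx.ne').log (div_pos hμs hx).ne').congr_deriv ?_
  simp only [Pi.div_apply, id]
  field_simp
  linear_combination -hs_sq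

theorem hasDerivAt_zero_temp_rhs (ξm μ : ℝ) {Δ : ℝ} (hΔ : 0 < Δ) :
    HasDerivAt (fun x : ℝ =>
      √(ξm ^ 2 + x ^ 2) - √(μ ^ 2 + x ^ 2) + μ * log ((μ + √(μ ^ 2 + x ^ 2)) / x))
      (Δ / √(ξm ^ 2 + Δ ^ 2) - √(μ ^ 2 + Δ ^ 2) / Δ) Δ := by
  have hs_sq : √(μ ^ 2 + Δ ^ 2) ^ 2 = μ ^ 2 + Δ ^ 2 := sq_sqrt (by positivity)
  refine (((hasDerivAt_sqrt_sq_add_sq ξm hΔ.ne').sub (hasDerivAt_sqrt_sq_add_sq μ hΔ.ne')).add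
    ((hasDerivAt_log_add_sqrt_sq_add_sq_div μ hΔ).const_mul μ)).congr_deriv ?_
  field_simp
  linear_combination √(ξm ^ 2 + Δ ^ 2) * hs_sq

theorem div_sqrt_sq_add_sq_lt_one {c x : ℝ} (hc : c ≠ 0) (hx : 0 < x) :
    x / √(c ^ 2 + x ^ 2) < 1 := by
  rw [div_lt_one (sqrt_pos.2 (by positivity)), lt_sqrt hx.le]
  exact lt_add_of_pos_left _ (by positivity)

theorem one_le_sqrt_sq_add_sq_div (c : ℝ) {x : ℝ} (hx : 0 < x) :
    1 ≤ √(c ^ 2 + x ^ 2) / x := by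
  rw [one_le_div hx, le_sqrt hx.le (by positivity)]
  exact le_add_of_nonneg_left (sq_nonneg c)

theorem zero_temp_rhs_strictAnti_general (ξm μ : ℝ) (hξ : 0 < ξm) :
    StrictAntiOn (fun Δ : ℝ =>
      Real.sqrt (ξm ^ 2 + Δ ^ 2) - Real.sqrt (μ ^ 2 + Δ ^ 2)
        + μ * Real.log ((μ + Real.sqrt (μ ^ 2 + Δ ^ 2)) / Δ)) (Set.Ioi 0) := by
  refine strictAntiOn_of_deriv_neg (convex_Ioi 0)
    (fun x hx => (hasDerivAt_zero_temp_rhs ξm μ hx).continuousAt.continuousWithinAt) ?_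
  rw [interior_Ioi]
  intro Δ hΔ
  rw [(hasDerivAt_zero_temp_rhs ξm μ hΔ).deriv]
  linarith [div_sqrt_sq_add_sq_lt_one hξ.ne' hΔ, one_le_sqrt_sq_add_sq_div μ hΔ]

theorem zero_temp_rhs_strictAnti (ξm μ : ℝ) (hξ : 0 < ξm) (hμ0 : 0 ≤ μ) (hμ : μ ≤ ξm) :
    StrictAntiOn (fun Δ : ℝ =>
      Real.sqrt (ξm ^ 2 + Δ ^ 2) - Real.sqrt (μ ^ 2 + Δ ^ 2)
        + μ * Real.log ((μ + Real.sqrt (μ ^ 2 + Δ ^ 2)) / Δ)) (Set.Ioi 0) :=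
  zero_temp_rhs_strictAnti_general ξm μ hξ
end

section
/- For every λ > 0, the inequality (1/2)(λ − 1/λ) < 1/sinh(1/λ) holds. -/
/-!
With `t = 1/λ` the claim reads `(1 - t²) sinh t < 2t`. For `t ≥ 1` the left side is `≤ 0`.
For `t < 1` combine `sinh t ≤ t eᵗ` (i.e. `1 - e^{-2t} ≤ 2t`) with `(1 - t) eᵗ ≤ 1`
(i.e. `1 - t ≤ e^{-t}`): then `(1 - t²) sinh t ≤ (1 + t) t < 2t`.
-/

open Real

lemma Real.one_sub_mul_exp_le_one (t : ℝ) : (1 - t) * exp t ≤ 1 := by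
  calc (1 - t) * exp t ≤ exp (-t) * exp t := by gcongr; exact one_sub_le_exp_neg t
    _ = 1 := by rw [← exp_add, neg_add_cancel, exp_zero]

lemma Real.sinh_le_mul_exp (t : ℝ) : sinh t ≤ t * exp t := by
  have h : exp t * (1 - 2 * t) ≤ exp (-t) :=
    calc exp t * (1 - 2 * t) ≤ exp t * exp (-2 * t) := by
          gcongr; linarith [add_one_le_exp (-2 * t)]
      _ = exp (-t) := by rw [← exp_add]; ring_nf
  rw [sinh_eq]
  linarith

lemma Real.one_sub_sq_mul_sinh_lt {t : ℝ} (ht : 0 < t) : (1 - t ^ 2) * sinh t < 2 * t := by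
  rcases le_or_gt 1 t with h1 | h1
  · have : (1 - t ^ 2) * sinh t ≤ 0 :=
      mul_nonpos_of_nonpos_of_nonneg (by nlinarith) (sinh_nonneg_iff.mpr ht.le)
    linarith
  · calc (1 - t ^ 2) * sinh t ≤ (1 + t) * (1 - t) * (t * exp t) := by
          rw [show 1 - t ^ 2 = (1 + t) * (1 - t) by ring]
          gcongr
          exact sinh_le_mul_exp t
      _ = (1 + t) * t * ((1 - t) * exp t) := by ring
      _ ≤ (1 + t) * t * 1 := by gcongr; exact one_sub_mul_exp_le_one t
      _ < 2 * t := by nlinarith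

theorem self_consistency (lam : ℝ) (hlam : 0 < lam) :
    (1 / 2) * (lam - 1 / lam) < 1 / Real.sinh (1 / lam) := by
  obtain ⟨t, ht, rfl⟩ : ∃ t, 0 < t ∧ lam = 1 / t := ⟨1 / lam, by positivity, by field_simp⟩
  have hsinh : 0 < sinh t := sinh_pos_iff.mpr ht
  rw [one_div_one_div, lt_div_iff₀ hsinh]
  calc 1 / 2 * (1 / t - t) * sinh t = (1 - t ^ 2) * sinh t / (2 * t) := by field_simp
    _ < 1 := (div_lt_one (by positivity)).mpr (one_sub_sq_mul_sinh_lt ht)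
end

section
/- Fix ξ_m > 0 and λ > 0. If Δ₀(μ) denotes the unique positive solution of the zero-temperature gap equation ξ_m/λ = sqrt(ξ_m² + Δ²) − sqrt(μ² + Δ²) + μ·log((μ + sqrt(μ² + Δ²))/Δ), then Δ₀ is strictly increasing in μ on (0, ξ_m). -/
/-!
Since `log ((μ + √(μ² + Δ²)) / Δ) = arsinh (μ / Δ)`, the right-hand side of the gap equation is
`F(μ, Δ) = √(ξ_m² + Δ²) - √(μ² + Δ²) + μ arsinh (μ / Δ)`, with partial derivatives
`∂F/∂μ = arsinh (μ / Δ) > 0` and `∂F/∂Δ = Δ / √(ξ_m² + Δ²) - √(μ² + Δ²) / Δ < 1 - 1 = 0`.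
If `μ₁ < μ₂` but `Δ₀ μ₂ ≤ Δ₀ μ₁`, then
`F(μ₁, Δ₀ μ₁) < F(μ₂, Δ₀ μ₁) ≤ F(μ₂, Δ₀ μ₂)`, contradicting that both equal `ξ_m / λ`.
-/

open Real Set

noncomputable def gapEquationRHS (ξm μ Δ : ℝ) : ℝ :=
  √(ξm ^ 2 + Δ ^ 2) - √(μ ^ 2 + Δ ^ 2) + μ * arsinh (μ / Δ)

section

variable {ξm μ Δ : ℝ}

lemma sqrt_one_add_div_sq (hΔ : 0 < Δ) : √(1 + (μ / Δ) ^ 2) = √(μ ^ 2 + Δ ^ 2) / Δ := by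
  rw [← sqrt_sq hΔ.le, ← sqrt_div' _ (sq_nonneg Δ), sqrt_sq hΔ.le]
  congr 1
  field_simp
  ring

lemma log_div_eq_arsinh (hΔ : 0 < Δ) :
    log ((μ + √(μ ^ 2 + Δ ^ 2)) / Δ) = arsinh (μ / Δ) := by
  rw [arsinh, sqrt_one_add_div_sq hΔ, add_div]

lemma hasDerivAt_gapEquationRHS_doping (hΔ : 0 < Δ) :
    HasDerivAt (fun μ => gapEquationRHS ξm μ Δ) (arsinh (μ / Δ)) μ := by
  have h := ((hasDerivAt_const μ √(ξm ^ 2 + Δ ^ 2)).sub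
    (((hasDerivAt_pow 2 μ).add_const (Δ ^ 2)).sqrt (by positivity))).add
    ((hasDerivAt_id μ).mul ((hasDerivAt_arsinh (μ / Δ)).comp μ ((hasDerivAt_id μ).div_const Δ)))
  refine h.congr_deriv ?_
  simp only [Function.comp_apply, id_eq, Nat.cast_ofNat, Nat.add_one_sub_one, pow_one]
  rw [sqrt_one_add_div_sq hΔ]
  field_simp
  ring

lemma hasDerivAt_gapEquationRHS_gap (hΔ : 0 < Δ) :
    HasDerivAt (fun Δ => gapEquationRHS ξm μ Δ)
      (Δ / √(ξm ^ 2 + Δ ^ 2) - √(μ ^ 2 + Δ ^ 2) / Δ) Δ := by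
  have hs2 : √(μ ^ 2 + Δ ^ 2) ^ 2 = μ ^ 2 + Δ ^ 2 := sq_sqrt (by positivity)
  have h := ((((hasDerivAt_pow 2 Δ).const_add (ξm ^ 2)).sqrt (by positivity)).sub
    (((hasDerivAt_pow 2 Δ).const_add (μ ^ 2)).sqrt (by positivity))).add
    (((hasDerivAt_arsinh (μ / Δ)).comp Δ ((hasDerivAt_inv hΔ.ne').const_mul μ)).const_mul μ)
  refine h.congr_deriv ?_
  simp only [Nat.cast_ofNat, Nat.add_one_sub_one, pow_one]
  rw [sqrt_one_add_div_sq hΔ]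
  field_simp
  linear_combination √(ξm ^ 2 + Δ ^ 2) * hs2

lemma strictMonoOn_gapEquationRHS_doping (hΔ : 0 < Δ) :
    StrictMonoOn (fun μ => gapEquationRHS ξm μ Δ) (Ici 0) := by
  apply strictMonoOn_of_deriv_pos (convex_Ici 0)
  · exact fun μ _ => (hasDerivAt_gapEquationRHS_doping hΔ).continuousAt.continuousWithinAt
  · intro μ hμ
    rw [interior_Ici] at hμ
    rw [(hasDerivAt_gapEquationRHS_doping hΔ).deriv, arsinh_pos_iff]
    exact div_pos hμ hΔ

lemma strictAntiOn_gapEquationRHS_gap (hμ : μ ≠ 0) :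
    StrictAntiOn (fun Δ => gapEquationRHS ξm μ Δ) (Ioi 0) := by
  apply strictAntiOn_of_deriv_neg (convex_Ioi 0)
  · exact fun Δ hΔ => (hasDerivAt_gapEquationRHS_gap hΔ).continuousAt.continuousWithinAt
  · intro Δ hΔ
    rw [interior_Ioi] at hΔ
    rw [(hasDerivAt_gapEquationRHS_gap hΔ).deriv, sub_neg]
    have hS : Δ ≤ √(ξm ^ 2 + Δ ^ 2) := le_sqrt_of_sq_le (le_add_of_nonneg_left (sq_nonneg ξm))
    have hs : Δ < √(μ ^ 2 + Δ ^ 2) := lt_sqrt_of_sq_lt (lt_add_of_pos_left _ (by positivity))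
    calc Δ / √(ξm ^ 2 + Δ ^ 2) ≤ 1 := div_le_one_of_le₀ hS (by positivity)
      _ < √(μ ^ 2 + Δ ^ 2) / Δ := (one_lt_div hΔ).mpr hs

end

theorem zero_temp_gap_strictMono_in_doping_general (ξm lam : ℝ)
    (Δ₀ : ℝ → ℝ)
    (hΔ : ∀ μ ∈ Set.Ioo (0 : ℝ) ξm, 0 < Δ₀ μ ∧
      ξm / lam = Real.sqrt (ξm ^ 2 + Δ₀ μ ^ 2) - Real.sqrt (μ ^ 2 + Δ₀ μ ^ 2)
        + μ * Real.log ((μ + Real.sqrt (μ ^ 2 + Δ₀ μ ^ 2)) / Δ₀ μ)) :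
    StrictMonoOn Δ₀ (Set.Ioo 0 ξm) := by
  have hsolves : ∀ μ ∈ Ioo 0 ξm, 0 < Δ₀ μ ∧ gapEquationRHS ξm μ (Δ₀ μ) = ξm / lam := by
    intro μ hμ
    obtain ⟨hpos, heq⟩ := hΔ μ hμ
    rw [heq, log_div_eq_arsinh hpos]
    exact ⟨hpos, rfl⟩
  intro μ₁ h₁ μ₂ h₂ hlt
  obtain ⟨hpos₁, heq₁⟩ := hsolves μ₁ h₁
  obtain ⟨hpos₂, heq₂⟩ := hsolves μ₂ h₂
  by_contra! hle
  have hdoping := strictMonoOn_gapEquationRHS_doping (ξm := ξm) hpos₁ h₁.1.le (h₁.1.trans hlt).le hlt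
  have hgap := (strictAntiOn_gapEquationRHS_gap (ξm := ξm) h₂.1.ne').antitoneOn hpos₂ hpos₁ hle
  simp only at hdoping hgap
  linarith

theorem zero_temp_gap_strictMono_in_doping (ξm lam : ℝ) (hξ : 0 < ξm) (hlam : 0 < lam)
    (Δ₀ : ℝ → ℝ)
    (hΔ : ∀ μ ∈ Set.Ioo (0 : ℝ) ξm, 0 < Δ₀ μ ∧
      ξm / lam = Real.sqrt (ξm ^ 2 + Δ₀ μ ^ 2) - Real.sqrt (μ ^ 2 + Δ₀ μ ^ 2)
        + μ * Real.log ((μ + Real.sqrt (μ ^ 2 + Δ₀ μ ^ 2)) / Δ₀ μ)) :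
    StrictMonoOn Δ₀ (Set.Ioo 0 ξm) :=
  zero_temp_gap_strictMono_in_doping_general ξm lam Δ₀ hΔ
end

section
/- For ξ_m > 0, μ ∈ (0, ξ_m), and λ > 1, the unique positive zero-temperature gap Δ₀(μ, λ) satisfies the strict bounds (ξ_m/2)(λ − 1/λ) < Δ₀(μ, λ) < ξ_m/sinh(1/λ). -/
/-!
With `G t = t * arsinh t - √(1 + t²)`, whose derivative is `arsinh t`, the right-hand side of the
gap equation equals `Δ * (√(1 + (ξ/Δ)²) + G (μ/Δ))`, so it is strictly increasing in `μ ≥ 0`.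
Comparing with its values at `μ = 0` and `μ = ξ` gives `√(ξ² + Δ²) - Δ < ξ/λ < ξ * arsinh (ξ/Δ)`;
squaring the first inequality and applying `sinh` to the second yields the two bounds.
-/

open Real Set

noncomputable def arsinhPrimitive (t : ℝ) : ℝ := t * arsinh t - √(1 + t ^ 2)

theorem arsinhPrimitive_zero : arsinhPrimitive 0 = -1 := by simp [arsinhPrimitive]

theorem sqrt_one_add_sq_add_arsinhPrimitive (t : ℝ) :
    √(1 + t ^ 2) + arsinhPrimitive t = t * arsinh t := by
  rw [arsinhPrimitive]; ring

theorem hasDerivAt_arsinhPrimitive (t : ℝ) : HasDerivAt arsinhPrimitive (arsinh t) t := by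
  have hsq : HasDerivAt (fun t : ℝ => 1 + t ^ 2) (2 * t) t := by
    simpa using ((hasDerivAt_id t).pow 2).const_add 1
  refine (((hasDerivAt_id' t).mul (hasDerivAt_arsinh t)).sub
    (hsq.sqrt (by positivity))).congr_deriv ?_
  field_simp
  ring

theorem strictMonoOn_arsinhPrimitive : StrictMonoOn arsinhPrimitive (Ici 0) := by
  refine strictMonoOn_of_hasDerivWithinAt_pos (convex_Ici 0)
    (fun t _ => (hasDerivAt_arsinhPrimitive t).continuousAt.continuousWithinAt)
    (fun t _ => (hasDerivAt_arsinhPrimitive t).hasDerivWithinAt) fun t ht => ?_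
  rw [interior_Ici] at ht
  exact arsinh_pos_iff.2 ht

section Rescaling

variable {Δ : ℝ}

theorem sqrt_sq_add_sq_eq_mul_sqrt (hΔ : 0 < Δ) (x : ℝ) :
    √(x ^ 2 + Δ ^ 2) = Δ * √(1 + (x / Δ) ^ 2) := by
  rw [← sqrt_sq hΔ.le, ← sqrt_mul (sq_nonneg Δ), sqrt_sq hΔ.le]
  congr 1
  field_simp
  ring

theorem log_add_sqrt_div_eq_arsinh (hΔ : 0 < Δ) (x : ℝ) :
    log ((x + √(x ^ 2 + Δ ^ 2)) / Δ) = arsinh (x / Δ) := by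
  rw [sqrt_sq_add_sq_eq_mul_sqrt hΔ, arsinh, add_div, mul_div_cancel_left₀ _ hΔ.ne']

theorem gap_equation_rhs_eq (hΔ : 0 < Δ) (ξ μ : ℝ) :
    √(ξ ^ 2 + Δ ^ 2) - √(μ ^ 2 + Δ ^ 2) + μ * log ((μ + √(μ ^ 2 + Δ ^ 2)) / Δ)
      = Δ * (√(1 + (ξ / Δ) ^ 2) + arsinhPrimitive (μ / Δ)) := by
  rw [log_add_sqrt_div_eq_arsinh hΔ, sqrt_sq_add_sq_eq_mul_sqrt hΔ,
    sqrt_sq_add_sq_eq_mul_sqrt hΔ, arsinhPrimitive]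
  field_simp
  ring

end Rescaling

theorem half_mul_sub_inv_lt_of_sqrt_lt {ξ lam Δ : ℝ} (hξ : 0 < ξ) (hlam : 0 < lam)
    (h : √(ξ ^ 2 + Δ ^ 2) < Δ + ξ / lam) : ξ / 2 * (lam - 1 / lam) < Δ := by
  have hsq := (sqrt_lt' (by linarith [sqrt_nonneg (ξ ^ 2 + Δ ^ 2)])).1 h
  have : ξ * (lam ^ 2 - 1) < 2 * Δ * lam := by
    field_simp at hsq
    nlinarith
  rw [div_mul_eq_mul_div, div_lt_iff₀ two_pos]
  field_simp
  nlinarith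

theorem lt_div_sinh_of_lt_arsinh {ξ c Δ : ℝ} (hc : 0 < c) (hΔ : 0 < Δ)
    (h : c < arsinh (ξ / Δ)) : Δ < ξ / sinh c := by
  rw [lt_div_iff₀ (sinh_pos_iff.2 hc), ← lt_div_iff₀' hΔ]
  simpa only [sinh_arsinh] using sinh_lt_sinh.2 h

theorem zero_temp_gap_bounds (ξm lam μ Δ : ℝ) (hξ : 0 < ξm) (hlam : 1 < lam)
    (hμ0 : 0 < μ) (hμ : μ < ξm) (hΔ : 0 < Δ)
    (heq : ξm / lam = Real.sqrt (ξm ^ 2 + Δ ^ 2) - Real.sqrt (μ ^ 2 + Δ ^ 2)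
        + μ * Real.log ((μ + Real.sqrt (μ ^ 2 + Δ ^ 2)) / Δ)) :
    ξm / 2 * (lam - 1 / lam) < Δ ∧ Δ < ξm / Real.sinh (1 / lam) := by
  rw [gap_equation_rhs_eq hΔ] at heq
  have hμΔ : 0 < μ / Δ := div_pos hμ0 hΔ
  have hG₀ : arsinhPrimitive 0 < arsinhPrimitive (μ / Δ) :=
    strictMonoOn_arsinhPrimitive self_mem_Ici hμΔ.le hμΔ
  have hGξ : arsinhPrimitive (μ / Δ) < arsinhPrimitive (ξm / Δ) :=
    strictMonoOn_arsinhPrimitive hμΔ.le (div_pos hξ hΔ).le (div_lt_div_of_pos_right hμ hΔ)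
  constructor
  · refine half_mul_sub_inv_lt_of_sqrt_lt hξ (by linarith) ?_
    rw [sqrt_sq_add_sq_eq_mul_sqrt hΔ, heq]
    rw [arsinhPrimitive_zero] at hG₀
    nlinarith
  · refine lt_div_sinh_of_lt_arsinh (by positivity) hΔ ?_
    have : ξm / lam < ξm * arsinh (ξm / Δ) := calc
      ξm / lam < Δ * (√(1 + (ξm / Δ) ^ 2) + arsinhPrimitive (ξm / Δ)) := by
        rw [heq]; gcongr
      _ = ξm * arsinh (ξm / Δ) := by
        rw [sqrt_one_add_sq_add_arsinhPrimitive, ← mul_assoc, mul_div_cancel₀ ξm hΔ.ne']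
    rwa [div_eq_mul_one_div, mul_lt_mul_iff_right₀ hξ] at this
end

section
/- For ξ_m > 0 and μ ∈ (0, ξ_m], the function g(u) = u·(sqrt(ξ_m² + u²) − sqrt(μ² + u²) + μ·log((μ + sqrt(μ² + u²))/u)) is strictly increasing on (0, ∞). -/
/-!
With `S = √(μ² + u²) ≤ T = √(ξm² + u²)` and `L = log ((μ + S) / u)`, one computes
`g'(u) = (T + u²/T) - (S + u²/S) + μ (L - μ/S)`. The first difference is nonnegative because
`x ↦ x + u²/x` is increasing for `x ≥ u`, and `L > μ/S` follows from `log (1 + x) > 2x/(x + 2)`.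
-/

open Real Set

lemma hasDerivAt_sqrt_sq_add_sq_s8 (a : ℝ) {u : ℝ} (hu : u ≠ 0) :
    HasDerivAt (fun v => √(a ^ 2 + v ^ 2)) (u / √(a ^ 2 + u ^ 2)) u := by
  have hpos : 0 < a ^ 2 + u ^ 2 := by positivity
  convert ((hasDerivAt_pow 2 u).const_add (a ^ 2)).sqrt hpos.ne' using 1
  field_simp
  ring

lemma hasDerivAt_mul_sqrt_sq_add_sq (a : ℝ) {u : ℝ} (hu : u ≠ 0) :
    HasDerivAt (fun v => v * √(a ^ 2 + v ^ 2))
      (√(a ^ 2 + u ^ 2) + u ^ 2 / √(a ^ 2 + u ^ 2)) u := by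
  refine ((hasDerivAt_id' u).fun_mul (hasDerivAt_sqrt_sq_add_sq_s8 a hu)).congr_deriv ?_
  field_simp

lemma add_sqrt_sq_add_sq_pos (a : ℝ) {u : ℝ} (hu : u ≠ 0) : 0 < a + √(a ^ 2 + u ^ 2) := by
  have habs : |a| < √(a ^ 2 + u ^ 2) :=
    lt_sqrt_of_sq_lt (by rw [sq_abs]; exact lt_add_of_pos_right _ (by positivity))
  linarith [neg_abs_le a]

lemma hasDerivAt_mul_log_add_sqrt_sq_add_sq_div (a : ℝ) {u : ℝ} (hu : u ≠ 0) :
    HasDerivAt (fun v => v * log ((a + √(a ^ 2 + v ^ 2)) / v))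
      (log ((a + √(a ^ 2 + u ^ 2)) / u) - a / √(a ^ 2 + u ^ 2)) u := by
  have hS2 := sq_sqrt (by positivity : 0 ≤ a ^ 2 + u ^ 2)
  have haS := add_sqrt_sq_add_sq_pos a hu
  have hquot := ((hasDerivAt_sqrt_sq_add_sq_s8 a hu).const_add a).fun_div (hasDerivAt_id' u) hu
  refine ((hasDerivAt_id' u).fun_mul (hquot.log (div_ne_zero haS.ne' hu))).congr_deriv ?_
  field_simp
  linear_combination -hS2

lemma div_sqrt_sq_add_sq_lt_log {a b : ℝ} (ha : 0 < a) (hb : 0 < b) :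
    a / √(a ^ 2 + b ^ 2) < log ((a + √(a ^ 2 + b ^ 2)) / b) := by
  set S := √(a ^ 2 + b ^ 2)
  have hS2 : S ^ 2 = a ^ 2 + b ^ 2 := sq_sqrt (by positivity)
  have hbS : b < S := lt_sqrt_of_sq_lt (by nlinarith)
  have hx : 0 < (a + S - b) / b := div_pos (by linarith) hb
  calc a / S ≤ 2 * ((a + S - b) / b) / ((a + S - b) / b + 2) := by
        rw [div_le_div_iff₀ (by linarith) (by positivity)]
        field_simp
        nlinarith
    _ < log (1 + (a + S - b) / b) := lt_log_one_add_of_pos hx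
    _ = log ((a + S) / b) := by congr 1; field_simp; ring

lemma add_sq_div_le_add_sq_div {c x y : ℝ} (hx : 0 < x) (hxy : x ≤ y) (hc : c ^ 2 ≤ x ^ 2) :
    x + c ^ 2 / x ≤ y + c ^ 2 / y := by
  have hy : 0 < y := hx.trans_le hxy
  rw [← sub_nonneg]
  have key : y + c ^ 2 / y - (x + c ^ 2 / x) = (y - x) * (x * y - c ^ 2) / (x * y) := by
    field_simp
    ring
  rw [key]
  exact div_nonneg (mul_nonneg (by linarith) (by nlinarith)) (by positivity)

theorem zero_temp_g_strictMono_general (ξm μ : ℝ) (hμ0 : 0 < μ) (hμ : μ ≤ ξm) :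
    StrictMonoOn (fun u : ℝ =>
      u * (Real.sqrt (ξm ^ 2 + u ^ 2) - Real.sqrt (μ ^ 2 + u ^ 2)
        + μ * Real.log ((μ + Real.sqrt (μ ^ 2 + u ^ 2)) / u))) (Set.Ioi 0) := by
  have hg : ∀ u ∈ Ioi (0 : ℝ), HasDerivAt (fun u : ℝ =>
      u * (√(ξm ^ 2 + u ^ 2) - √(μ ^ 2 + u ^ 2) + μ * log ((μ + √(μ ^ 2 + u ^ 2)) / u)))
      ((√(ξm ^ 2 + u ^ 2) + u ^ 2 / √(ξm ^ 2 + u ^ 2))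
        - (√(μ ^ 2 + u ^ 2) + u ^ 2 / √(μ ^ 2 + u ^ 2))
        + μ * (log ((μ + √(μ ^ 2 + u ^ 2)) / u) - μ / √(μ ^ 2 + u ^ 2))) u := by
    intro u hu
    refine (((hasDerivAt_mul_sqrt_sq_add_sq ξm hu.ne').fun_sub
      (hasDerivAt_mul_sqrt_sq_add_sq μ hu.ne')).fun_add
      ((hasDerivAt_mul_log_add_sqrt_sq_add_sq_div μ hu.ne').const_mul μ)).congr_of_eventuallyEq
      (.of_forall fun v => ?_)
    ring
  refine strictMonoOn_of_hasDerivWithinAt_pos (convex_Ioi 0)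
    (fun u hu => (hg u hu).continuousAt.continuousWithinAt)
    (fun u hu => (hg u (interior_subset hu)).hasDerivWithinAt) (fun u hu => ?_)
  rw [interior_Ioi] at hu
  have hS : 0 < √(μ ^ 2 + u ^ 2) := sqrt_pos.mpr (by positivity)
  have hST : √(μ ^ 2 + u ^ 2) ≤ √(ξm ^ 2 + u ^ 2) := sqrt_le_sqrt (by nlinarith)
  have hmono := add_sq_div_le_add_sq_div (c := u) hS hST
    (by rw [sq_sqrt (by positivity)]; nlinarith)
  have hlog := mul_pos hμ0 (sub_pos.mpr (div_sqrt_sq_add_sq_lt_log hμ0 hu))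
  linarith

theorem zero_temp_g_strictMono (ξm μ : ℝ) (hξ : 0 < ξm) (hμ0 : 0 < μ) (hμ : μ ≤ ξm) :
    StrictMonoOn (fun u : ℝ =>
      u * (Real.sqrt (ξm ^ 2 + u ^ 2) - Real.sqrt (μ ^ 2 + u ^ 2)
        + μ * Real.log ((μ + Real.sqrt (μ ^ 2 + u ^ 2)) / u))) (Set.Ioi 0) :=
  zero_temp_g_strictMono_general ξm μ hμ0 hμ
end

section
/- For T > 0, ξ_m > 0, μ ∈ (0, ξ_m], the finite-temperature function f(Δ) = 2T·log(cosh(sqrt(ξ_m² + Δ²)/(2T))/cosh(sqrt(μ² + Δ²)/(2T))) + μ·∫₀^μ tanh(sqrt(ξ² + Δ²)/(2T))/sqrt(ξ² + Δ²) dξ is strictly decreasing in Δ on (0, ∞). -/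
/-!
Write `φ(E) = tanh (E / 2T) / E` and `E_x(Δ) = √(x² + Δ²)`. Since `tanh x / x` is strictly
decreasing on `(0, ∞)`, so is `φ`, and hence `Δ ↦ φ(E_ξ(Δ))` is strictly decreasing for every `ξ`;
integrating over `ξ ∈ [0, μ]` makes the second term strictly decreasing. The first term is
antitone because `2T log cosh (E_x(Δ) / 2T)` has `Δ`-derivative `Δ φ(E_x(Δ))`, so its derivative
is `Δ (φ(E_{ξ_m}) - φ(E_μ)) ≤ 0` as `E_μ ≤ E_{ξ_m}`.
-/

open Real Set

namespace Real

theorem hasDerivAt_tanh (x : ℝ) : HasDerivAt tanh (1 / cosh x ^ 2) x := by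
  rw [show tanh = fun y => sinh y / cosh y from funext tanh_eq_sinh_div_cosh]
  refine ((hasDerivAt_sinh x).div (hasDerivAt_cosh x) (cosh_pos x).ne').congr_deriv ?_
  rw [← cosh_sq_sub_sinh_sq x]
  ring

theorem continuous_tanh : Continuous tanh :=
  continuous_iff_continuousAt.2 fun x => (hasDerivAt_tanh x).continuousAt

theorem strictAntiOn_tanh_div_self : StrictAntiOn (fun x => tanh x / x) (Ioi 0) := by
  refine strictAntiOn_of_hasDerivWithinAt_neg (convex_Ioi 0)
    (continuous_tanh.continuousOn.div continuousOn_id fun x hx => ne_of_gt hx)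
    (fun x hx => ((hasDerivAt_tanh x).div (hasDerivAt_id x)
      (ne_of_gt (interior_subset hx))).hasDerivWithinAt) fun x hx => ?_
  rw [interior_Ioi] at hx
  have hx : 0 < x := hx
  have hkey : x < sinh x * cosh x := calc
    x < sinh x := self_lt_sinh_iff.2 hx
    _ ≤ sinh x * cosh x := le_mul_of_one_le_right (sinh_nonneg_iff.2 hx.le) (one_le_cosh x)
  have hnum : 1 / cosh x ^ 2 * x - tanh x * 1 = (x - sinh x * cosh x) / cosh x ^ 2 := by
    rw [tanh_eq_sinh_div_cosh]
    field_simp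
  rw [id, hnum]
  exact div_neg_of_neg_of_pos (div_neg_of_neg_of_pos (sub_neg.2 hkey) (by positivity))
    (by positivity)

theorem strictAntiOn_tanh_div_div_self {c : ℝ} (hc : 0 < c) :
    StrictAntiOn (fun E => tanh (E / c) / E) (Ioi 0) := by
  intro a ha b hb hab
  have key := strictAntiOn_tanh_div_self (div_pos ha hc) (div_pos hb hc)
    (div_lt_div_of_pos_right hab hc)
  have hrescale : ∀ E : ℝ, E ≠ 0 → tanh (E / c) / E = tanh (E / c) / (E / c) / c := by
    intro E hE
    field_simp
  simp only
  rw [hrescale a (ne_of_gt ha), hrescale b (ne_of_gt hb)]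
  exact div_lt_div_of_pos_right key hc

end Real

theorem strictAntiOn_tanh_sqrt_div_sqrt {c : ℝ} (hc : 0 < c) (x : ℝ) :
    StrictAntiOn (fun Δ => tanh (√(x ^ 2 + Δ ^ 2) / c) / √(x ^ 2 + Δ ^ 2)) (Ioi 0) := by
  have hmono : StrictMonoOn (fun Δ : ℝ => √(x ^ 2 + Δ ^ 2)) (Ioi 0) := by
    intro a ha b hb hab
    have ha : 0 < a := ha
    exact sqrt_lt_sqrt (by positivity) (by gcongr)
  exact (strictAntiOn_tanh_div_div_self hc).comp_strictMonoOn hmono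
    fun Δ hΔ => sqrt_pos.2 (by have : 0 < Δ := hΔ; positivity)

theorem hasDerivAt_mul_log_cosh_sqrt_div {c : ℝ} (hc : c ≠ 0) (x : ℝ) {Δ : ℝ} (hΔ : Δ ≠ 0) :
    HasDerivAt (fun Δ => c * log (cosh (√(x ^ 2 + Δ ^ 2) / c)))
      (Δ * (tanh (√(x ^ 2 + Δ ^ 2) / c) / √(x ^ 2 + Δ ^ 2))) Δ := by
  have hE : 0 < x ^ 2 + Δ ^ 2 := by positivity
  have hsq : HasDerivAt (fun Δ => x ^ 2 + Δ ^ 2) (2 * Δ) Δ := by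
    simpa using (hasDerivAt_pow 2 Δ).const_add (x ^ 2)
  refine ((((hasDerivAt_cosh _).comp Δ ((hsq.sqrt hE.ne').div_const c)).log
    (cosh_pos _).ne').const_mul c).congr_deriv ?_
  rw [tanh_eq_sinh_div_cosh, Function.comp_apply]
  field_simp

theorem antitoneOn_mul_log_cosh_sqrt_div {c : ℝ} (hc : 0 < c) {x y : ℝ} (hxy : x ^ 2 ≤ y ^ 2) :
    AntitoneOn
      (fun Δ => c * log (cosh (√(y ^ 2 + Δ ^ 2) / c) / cosh (√(x ^ 2 + Δ ^ 2) / c))) (Ioi 0) := by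
  have hsplit : (fun Δ => c * log (cosh (√(y ^ 2 + Δ ^ 2) / c) / cosh (√(x ^ 2 + Δ ^ 2) / c))) =
      fun Δ => c * log (cosh (√(y ^ 2 + Δ ^ 2) / c)) - c * log (cosh (√(x ^ 2 + Δ ^ 2) / c)) := by
    funext Δ
    rw [log_div (cosh_pos _).ne' (cosh_pos _).ne', mul_sub]
  have hderiv : ∀ Δ : ℝ, 0 < Δ → HasDerivAt
      (fun Δ => c * log (cosh (√(y ^ 2 + Δ ^ 2) / c)) - c * log (cosh (√(x ^ 2 + Δ ^ 2) / c)))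
      (Δ * (tanh (√(y ^ 2 + Δ ^ 2) / c) / √(y ^ 2 + Δ ^ 2)
        - tanh (√(x ^ 2 + Δ ^ 2) / c) / √(x ^ 2 + Δ ^ 2))) Δ := fun Δ hΔ => by
    rw [mul_sub]
    exact (hasDerivAt_mul_log_cosh_sqrt_div hc.ne' y hΔ.ne').sub
      (hasDerivAt_mul_log_cosh_sqrt_div hc.ne' x hΔ.ne')
  rw [hsplit]
  refine antitoneOn_of_hasDerivWithinAt_nonpos (convex_Ioi 0)
    (fun Δ hΔ => (hderiv Δ hΔ).continuousAt.continuousWithinAt)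
    (fun Δ hΔ => (hderiv Δ (interior_subset hΔ)).hasDerivWithinAt) fun Δ hΔ => ?_
  have hΔ : 0 < Δ := interior_subset hΔ
  have hE : √(x ^ 2 + Δ ^ 2) ≤ √(y ^ 2 + Δ ^ 2) := sqrt_le_sqrt (by linarith)
  refine mul_nonpos_of_nonneg_of_nonpos hΔ.le (sub_nonpos.2 ?_)
  exact (strictAntiOn_tanh_div_div_self hc).antitoneOn (sqrt_pos.2 (by positivity))
    (sqrt_pos.2 (by positivity)) hE

theorem strictAntiOn_intervalIntegral {F : ℝ → ℝ → ℝ} {a b : ℝ} {s : Set ℝ} (hab : a < b)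
    (hcont : ∀ Δ ∈ s, ContinuousOn (fun ξ => F ξ Δ) (Icc a b))
    (hanti : ∀ ξ ∈ Icc a b, StrictAntiOn (F ξ) s) :
    StrictAntiOn (fun Δ => ∫ ξ in a..b, F ξ Δ) s := fun Δ₁ h₁ Δ₂ h₂ h₁₂ =>
  intervalIntegral.integral_lt_integral_of_continuousOn_of_le_of_exists_lt hab
    (hcont Δ₂ h₂) (hcont Δ₁ h₁) (fun ξ hξ => (hanti ξ (Ioc_subset_Icc_self hξ) h₁ h₂ h₁₂).le)
    ⟨a, left_mem_Icc.2 hab.le, hanti a (left_mem_Icc.2 hab.le) h₁ h₂ h₁₂⟩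

theorem strictAntiOn_integral_tanh_sqrt_div_sqrt {c μ : ℝ} (hc : 0 < c) (hμ : 0 < μ) :
    StrictAntiOn
      (fun Δ => ∫ ξ in (0 : ℝ)..μ, tanh (√(ξ ^ 2 + Δ ^ 2) / c) / √(ξ ^ 2 + Δ ^ 2)) (Ioi 0) := by
  refine strictAntiOn_intervalIntegral hμ (fun Δ hΔ => ?_)
    fun ξ _ => strictAntiOn_tanh_sqrt_div_sqrt hc ξ
  have hΔ : 0 < Δ := hΔ
  have hE : Continuous fun ξ : ℝ => √(ξ ^ 2 + Δ ^ 2) := by fun_prop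
  exact ((continuous_tanh.comp (hE.div_const c)).div hE
    fun ξ => (sqrt_pos.2 (by positivity)).ne').continuousOn

theorem finite_temp_rhs_strictAnti_in_gap_general (T ξm μ : ℝ) (hT : 0 < T)
    (hμ0 : 0 < μ) (hμ : μ ≤ ξm) :
    StrictAntiOn (fun Δ : ℝ =>
      2 * T * Real.log (Real.cosh (Real.sqrt (ξm ^ 2 + Δ ^ 2) / (2 * T))
          / Real.cosh (Real.sqrt (μ ^ 2 + Δ ^ 2) / (2 * T)))
        + μ * ∫ ξ in (0 : ℝ)..μ,
            Real.tanh (Real.sqrt (ξ ^ 2 + Δ ^ 2) / (2 * T)) / Real.sqrt (ξ ^ 2 + Δ ^ 2))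
      (Set.Ioi 0) := by
  have h2T : 0 < 2 * T := by positivity
  have hsq : μ ^ 2 ≤ ξm ^ 2 := pow_le_pow_left₀ hμ0.le hμ 2
  refine (antitoneOn_mul_log_cosh_sqrt_div h2T hsq).add_strictAnti fun Δ₁ h₁ Δ₂ h₂ h₁₂ => ?_
  exact mul_lt_mul_of_pos_left (strictAntiOn_integral_tanh_sqrt_div_sqrt h2T hμ0 h₁ h₂ h₁₂) hμ0

theorem finite_temp_rhs_strictAnti_in_gap (T ξm μ : ℝ) (hT : 0 < T) (hξ : 0 < ξm)
    (hμ0 : 0 < μ) (hμ : μ ≤ ξm) :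
    StrictAntiOn (fun Δ : ℝ =>
      2 * T * Real.log (Real.cosh (Real.sqrt (ξm ^ 2 + Δ ^ 2) / (2 * T))
          / Real.cosh (Real.sqrt (μ ^ 2 + Δ ^ 2) / (2 * T)))
        + μ * ∫ ξ in (0 : ℝ)..μ,
            Real.tanh (Real.sqrt (ξ ^ 2 + Δ ^ 2) / (2 * T)) / Real.sqrt (ξ ^ 2 + Δ ^ 2))
      (Set.Ioi 0) :=
  finite_temp_rhs_strictAnti_in_gap_general T ξm μ hT hμ0 hμ
end

section
/- For fixed a ≥ 0 and b > a ≥ 0, the function T ↦ 2T·log(cosh(b/(2T))/cosh(a/(2T))) − (b·tanh(b/(2T)) − a·tanh(a/(2T))) is strictly negative for all T > 0. -/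
/-!
With `s = 2T`, `x = a/s`, `y = b/s`, the expression is `s` times
`log (cosh y / cosh x) - (y tanh y - x tanh x)`. Since `log ∘ cosh` has derivative `tanh`,
the mean value theorem gives `log (cosh y / cosh x) = (y - x) tanh c` for some `c ∈ (x, y)`,
and as `tanh` is strictly increasing and `x ≥ 0`,
`(y - x) tanh c < (y - x) tanh y ≤ y tanh y - x tanh x`.
-/

open Real Set

namespace Real

theorem tanh_strictMono : StrictMono tanh := fun x y hxy => by
  have hIoo (z : ℝ) : tanh z ∈ Ioo (-1) 1 := ⟨neg_one_lt_tanh z, tanh_lt_one z⟩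
  rwa [← artanh_lt_artanh_iff (hIoo x) (hIoo y), artanh_tanh, artanh_tanh]

theorem hasDerivAt_log_cosh (x : ℝ) : HasDerivAt (fun u => log (cosh u)) (tanh x) x := by
  simpa only [← tanh_eq_sinh_div_cosh] using (hasDerivAt_cosh x).log (cosh_pos x).ne'

theorem log_cosh_div_cosh_lt {x y : ℝ} (hx : 0 ≤ x) (hxy : x < y) :
    log (cosh y / cosh x) < y * tanh y - x * tanh x := by
  obtain ⟨c, hc, hslope⟩ := exists_hasDerivAt_eq_slope (fun u => log (cosh u)) tanh hxy
    (continuous_cosh.log fun u => (cosh_pos u).ne').continuousOn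
    fun u _ => hasDerivAt_log_cosh u
  calc log (cosh y / cosh x) = (y - x) * tanh c := by
        rw [log_div (cosh_pos y).ne' (cosh_pos x).ne', hslope,
          mul_div_cancel₀ _ (sub_ne_zero.2 hxy.ne')]
    _ < (y - x) * tanh y := mul_lt_mul_of_pos_left (tanh_strictMono hc.2) (sub_pos.2 hxy)
    _ ≤ y * tanh y - x * tanh x := by
      rw [sub_mul]; linarith [mul_le_mul_of_nonneg_left (tanh_strictMono hxy).le hx]

end Real

theorem q_negative (a b : ℝ) (ha : 0 ≤ a) (hab : a < b) :
    ∀ T : ℝ, 0 < T →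
      2 * T * Real.log (Real.cosh (b / (2 * T)) / Real.cosh (a / (2 * T)))
        - (b * Real.tanh (b / (2 * T)) - a * Real.tanh (a / (2 * T))) < 0 := by
  intro T hT
  have hs : 0 < 2 * T := by positivity
  have hkey := log_cosh_div_cosh_lt (div_nonneg ha hs.le) (div_lt_div_of_pos_right hab hs)
  calc _ = 2 * T * (log (cosh (b / (2 * T)) / cosh (a / (2 * T)))
          - (b / (2 * T) * tanh (b / (2 * T)) - a / (2 * T) * tanh (a / (2 * T)))) := by
        field_simp
    _ < 0 := mul_neg_of_pos_of_neg hs (sub_neg.2 hkey)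
end

section
/- For ξ_m > 0, λ > 0, T > 0, and μ = 0, the finite-temperature gap equation cosh(sqrt(ξ_m² + Δ²)/(2T))/cosh(Δ/(2T)) = exp(ξ_m/(2λT)) has a positive solution Δ > 0 if and only if exp(ξ_m/(2λT)) < cosh(ξ_m/(2T)). -/
/-!
With `a = ξ/2T`, `b = Δ/2T` and `cosh a cosh b = (cosh (a+b) + cosh (a-b))/2`, the inequality
`h(Δ) < h(0) = cosh (ξ/2T)` for `Δ ≠ 0` is Jensen's inequality at `(a+b)²` and `(a-b)²` for
`u ↦ cosh √u`, which is strictly convex on `[0, ∞)` because its Taylor series `∑ uⁿ/(2n)!` has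
nonnegative coefficients. Conversely `h(Δ) ≤ exp ((√(ξ² + Δ²) - Δ)/2T)` falls
below `exp (ξ/2λT)` at `Δ = λξ/2`, and the intermediate value theorem produces a solution.
-/

open Real Set

theorem hasSum_cosh_sqrt {u : ℝ} (hu : 0 ≤ u) :
    HasSum (fun n : ℕ ↦ u ^ n / (2 * n).factorial) (cosh √u) := by
  simpa only [pow_mul, sq_sqrt hu] using hasSum_cosh √u

theorem strictConvexOn_cosh_sqrt : StrictConvexOn ℝ (Ici 0) fun u ↦ cosh √u := by
  refine ⟨convex_Ici 0, fun x hx y hy hxy a b ha hb hab ↦ ?_⟩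
  simp only [smul_eq_mul]
  have hmem : 0 ≤ a * x + b * y := add_nonneg (mul_nonneg ha.le hx) (mul_nonneg hb.le hy)
  refine hasSum_lt (i := 2) (fun n ↦ ?_) ?_ (hasSum_cosh_sqrt hmem)
    (((hasSum_cosh_sqrt hx).mul_left a).add ((hasSum_cosh_sqrt hy).mul_left b))
  · dsimp only
    rw [mul_div_assoc', mul_div_assoc', ← add_div]
    gcongr
    exact (convexOn_pow n).2 hx hy ha.le hb.le hab
  · rw [mul_div_assoc', mul_div_assoc', ← add_div]
    gcongr
    exact (strictConvexOn_pow le_rfl).2 hx hy hxy ha hb hab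

theorem cosh_sqrt_sq_add_sq_lt {a b : ℝ} (ha : a ≠ 0) (hb : b ≠ 0) :
    cosh √(a ^ 2 + b ^ 2) < cosh a * cosh b := by
  have hne : (a + b) ^ 2 ≠ (a - b) ^ 2 := by
    intro h
    exact mul_ne_zero ha hb (by linear_combination h / 4)
  have key := strictConvexOn_cosh_sqrt.2 (sq_nonneg (a + b)) (sq_nonneg (a - b)) hne
    (by norm_num : (0 : ℝ) < 1 / 2) (by norm_num : (0 : ℝ) < 1 / 2) (by norm_num)
  simp only [smul_eq_mul, sqrt_sq_eq_abs, cosh_abs, cosh_add, cosh_sub] at key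
  rw [show 1 / 2 * (a + b) ^ 2 + 1 / 2 * (a - b) ^ 2 = a ^ 2 + b ^ 2 by ring] at key
  linarith

theorem cosh_le_exp_sub_mul_cosh {u v : ℝ} (h : v ≤ u) : cosh u ≤ exp (u - v) * cosh v := by
  have : exp (-u) ≤ exp (u - v) * exp (-v) := by
    rw [← exp_add]
    exact exp_le_exp.2 (by linarith)
  rw [cosh_eq, cosh_eq, mul_div_assoc', mul_add, ← exp_add, sub_add_cancel]
  gcongr

/-- The left-hand side `h(Δ)` of the gap equation, with `ξ` standing for `ξ_m`. -/
noncomputable def gapRatio (ξ T Δ : ℝ) : ℝ :=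
  cosh (√(ξ ^ 2 + Δ ^ 2) / (2 * T)) / cosh (Δ / (2 * T))

theorem continuous_gapRatio (ξ T : ℝ) : Continuous (gapRatio ξ T) :=
  .div (by fun_prop) (by fun_prop) fun _ ↦ (cosh_pos _).ne'

theorem gapRatio_zero {ξ : ℝ} (hξ : 0 ≤ ξ) (T : ℝ) : gapRatio ξ T 0 = cosh (ξ / (2 * T)) := by
  simp [gapRatio, sqrt_sq hξ]

theorem gapRatio_lt_cosh {ξ T Δ : ℝ} (hξ : ξ ≠ 0) (hT : 0 < T) (hΔ : Δ ≠ 0) :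
    gapRatio ξ T Δ < cosh (ξ / (2 * T)) := by
  have hscale : √(ξ ^ 2 + Δ ^ 2) / (2 * T) = √((ξ / (2 * T)) ^ 2 + (Δ / (2 * T)) ^ 2) := by
    rw [div_pow, div_pow, ← add_div, sqrt_div' _ (by positivity), sqrt_sq (by positivity)]
  rw [gapRatio, hscale, div_lt_iff₀ (cosh_pos _)]
  exact cosh_sqrt_sq_add_sq_lt (by positivity) (by positivity)

theorem gapRatio_lt_exp {ξ T Δ : ℝ} (hξ : ξ ≠ 0) (hT : 0 < T) (hΔ : 0 < Δ) :
    gapRatio ξ T Δ < exp (ξ ^ 2 / (4 * Δ * T)) := by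
  have hle : Δ ≤ √(ξ ^ 2 + Δ ^ 2) := le_sqrt_of_sq_le (by nlinarith)
  have hlt : √(ξ ^ 2 + Δ ^ 2) < Δ + ξ ^ 2 / (2 * Δ) := by
    rw [sqrt_lt' (by positivity), add_sq, mul_div_assoc',
      mul_div_cancel_left₀ _ (by positivity)]
    nlinarith [pow_pos (show 0 < ξ ^ 2 / (2 * Δ) by positivity) 2]
  have hexponent : √(ξ ^ 2 + Δ ^ 2) / (2 * T) - Δ / (2 * T) < ξ ^ 2 / (4 * Δ * T) := by
    rw [← sub_div, div_lt_iff₀ (by positivity)]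
    calc √(ξ ^ 2 + Δ ^ 2) - Δ < ξ ^ 2 / (2 * Δ) := by linarith
      _ = ξ ^ 2 / (4 * Δ * T) * (2 * T) := by field_simp; ring
  rw [gapRatio, div_lt_iff₀ (cosh_pos _)]
  calc cosh (√(ξ ^ 2 + Δ ^ 2) / (2 * T))
      ≤ exp (√(ξ ^ 2 + Δ ^ 2) / (2 * T) - Δ / (2 * T)) * cosh (Δ / (2 * T)) :=
        cosh_le_exp_sub_mul_cosh (by gcongr)
    _ < exp (ξ ^ 2 / (4 * Δ * T)) * cosh (Δ / (2 * T)) := by gcongr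

theorem zero_doping_finite_temp_solvability (ξm lam T : ℝ) (hξ : 0 < ξm) (hlam : 0 < lam)
    (hT : 0 < T) :
    (∃ Δ : ℝ, 0 < Δ ∧
        Real.cosh (Real.sqrt (ξm ^ 2 + Δ ^ 2) / (2 * T)) / Real.cosh (Δ / (2 * T))
          = Real.exp (ξm / (2 * lam * T)))
      ↔ Real.exp (ξm / (2 * lam * T)) < Real.cosh (ξm / (2 * T)) := by
  change (∃ Δ, 0 < Δ ∧ gapRatio ξm T Δ = _) ↔ _
  constructor
  · rintro ⟨Δ, hΔ, hsol⟩
    exact hsol ▸ gapRatio_lt_cosh hξ.ne' hT hΔ.ne'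
  · intro hgap
    have hΔ₀ : 0 < lam * ξm / 2 := by positivity
    have hlarge : gapRatio ξm T (lam * ξm / 2) < exp (ξm / (2 * lam * T)) := by
      convert gapRatio_lt_exp hξ.ne' hT hΔ₀ using 2
      field_simp
      ring
    obtain ⟨Δ, hΔ, hsol⟩ := intermediate_value_Ioo' hΔ₀.le
      (continuous_gapRatio ξm T).continuousOn ⟨hlarge, gapRatio_zero hξ.le T ▸ hgap⟩
    exact ⟨Δ, hΔ.1, hsol⟩
end

section
/- For T > 0 and ξ_m > 0, the function h(Δ) = cosh(sqrt(ξ_m² + Δ²)/(2T))/cosh(Δ/(2T)) is strictly decreasing in Δ on [0, ∞) and tends to 1 as Δ → ∞. -/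
open Filter Topology

/-!
Put `a = 1 / (2T)`, `b = (a ξ_m)²` and `x = a Δ`; then `h(Δ) = k(x)` with
`k(x) = cosh √(b + x²) / cosh x`. Writing `s = √(b + x²) > x`, one has `s' = x / s`, so `k'(x) < 0`
amounts to `tanh s / s < tanh x / x`. By the product-to-sum formulas this is
`sinh (s - x) / (s - x) < sinh (s + x) / (s + x)`, which holds because `sinh` is strictly convex
on `[0, ∞)` and vanishes at `0`. For the limit, `1 ≤ k(x) ≤ exp (s - x)` and `s - x = b / (s + x) → 0`.
-/

namespace Real

lemma strictConvexOn_sinh_Ici : StrictConvexOn ℝ (Set.Ici 0) sinh := by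
  refine StrictMonoOn.strictConvexOn_of_deriv (convex_Ici 0) continuous_sinh.continuousOn ?_
  rw [deriv_sinh, interior_Ici]
  exact cosh_strictMonoOn.mono Set.Ioi_subset_Ici_self

lemma strictMonoOn_sinh_div_self : StrictMonoOn (fun y => sinh y / y) (Set.Ioi 0) := by
  intro x hx y hy hxy
  simpa using strictConvexOn_sinh_Ici.secant_strict_mono Set.self_mem_Ici
    (Set.mem_Ici_of_Ioi hx) (Set.mem_Ici_of_Ioi hy) (ne_of_gt hx) (ne_of_gt hy) hxy

/-- `tanh y / y < tanh x / x` for `0 < x < y`, with the denominators cleared. -/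
lemma mul_sinh_mul_cosh_lt {x y : ℝ} (hx : 0 < x) (hxy : x < y) :
    x * (sinh y * cosh x) < y * (sinh x * cosh y) := by
  have hslope := strictMonoOn_sinh_div_self (sub_pos.2 hxy) (show 0 < y + x by linarith)
    (show y - x < y + x by linarith)
  rw [div_lt_div_iff₀ (sub_pos.2 hxy) (by linarith)] at hslope
  have hsum : sinh y * cosh x = (sinh (y + x) + sinh (y - x)) / 2 := by
    rw [sinh_add, sinh_sub]; ring
  have hdiff : sinh x * cosh y = (sinh (y + x) - sinh (y - x)) / 2 := by
    rw [sinh_add, sinh_sub]; ring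
  rw [hsum, hdiff]
  nlinarith

lemma cosh_add_le_exp_mul_cosh {u : ℝ} (hu : 0 ≤ u) (x : ℝ) : cosh (u + x) ≤ exp u * cosh x := by
  have : exp (-u) ≤ exp u := exp_le_exp.2 (by linarith)
  rw [cosh_eq, cosh_eq, neg_add, exp_add, exp_add]
  nlinarith [exp_pos x, exp_pos (-x)]

lemma strictAntiOn_cosh_sqrt_add_sq_div_cosh {b : ℝ} (hb : 0 < b) :
    StrictAntiOn (fun x => cosh √(b + x ^ 2) / cosh x) (Set.Ici 0) := by
  have hcont : Continuous fun x => cosh √(b + x ^ 2) / cosh x :=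
    (continuous_cosh.comp (by fun_prop)).div continuous_cosh fun x => (cosh_pos x).ne'
  refine strictAntiOn_of_deriv_neg (convex_Ici 0) hcont.continuousOn ?_
  rw [interior_Ici]
  intro x (hx : 0 < x)
  set s := √(b + x ^ 2)
  have hs : x < s := lt_sqrt_of_sq_lt (by linarith)
  have hs_pos : 0 < s := hx.trans hs
  have hsqrt : HasDerivAt (fun x => √(b + x ^ 2)) (x / s) x := by
    convert ((hasDerivAt_pow 2 x).const_add b).sqrt (by positivity) using 1
    field_simp
    push_cast
    ring
  rw [(hsqrt.cosh.fun_div (hasDerivAt_cosh x) (cosh_pos x).ne').deriv]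
  refine div_neg_of_neg_of_pos ?_ (by positivity)
  rw [sub_neg]
  calc sinh s * (x / s) * cosh x = x * (sinh s * cosh x) / s := by ring
    _ < s * (sinh x * cosh s) / s := div_lt_div_of_pos_right (mul_sinh_mul_cosh_lt hx hs) hs_pos
    _ = cosh s * sinh x := by field_simp

lemma tendsto_sqrt_add_sq_sub_self {b : ℝ} (hb : 0 ≤ b) :
    Tendsto (fun x => √(b + x ^ 2) - x) atTop (𝓝 0) := by
  have hsum : Tendsto (fun x : ℝ => √(b + x ^ 2) + x) atTop atTop :=
    tendsto_atTop_add_left_of_le _ 0 (fun x => sqrt_nonneg _) tendsto_id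
  refine (hsum.const_div_atTop b).congr' ?_
  filter_upwards [eventually_gt_atTop 0] with x hx
  have : 0 < √(b + x ^ 2) + x := by positivity
  rw [div_eq_iff this.ne']
  nlinarith [sq_sqrt (show 0 ≤ b + x ^ 2 by positivity)]

lemma tendsto_cosh_sqrt_add_sq_div_cosh {b : ℝ} (hb : 0 ≤ b) :
    Tendsto (fun x => cosh √(b + x ^ 2) / cosh x) atTop (𝓝 1) := by
  have hexp : Tendsto (fun x => exp (√(b + x ^ 2) - x)) atTop (𝓝 1) := by
    simpa using (tendsto_sqrt_add_sq_sub_self hb).rexp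
  have hle (x : ℝ) : x ≤ √(b + x ^ 2) := le_sqrt_of_sq_le (by linarith)
  refine tendsto_of_tendsto_of_tendsto_of_le_of_le' tendsto_const_nhds hexp ?_ ?_ <;>
    filter_upwards [eventually_ge_atTop 0] with x hx
  · rw [one_le_div (cosh_pos x), cosh_le_cosh, abs_of_nonneg hx, abs_of_nonneg (hx.trans (hle x))]
    exact hle x
  · rw [div_le_iff₀ (cosh_pos x)]
    simpa using cosh_add_le_exp_mul_cosh (sub_nonneg.2 (hle x)) x

lemma sqrt_sq_add_sq_div {c : ℝ} (hc : 0 ≤ c) (a x : ℝ) :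
    √(a ^ 2 + x ^ 2) / c = √((a / c) ^ 2 + (x / c) ^ 2) := by
  rw [div_pow, div_pow, ← add_div, sqrt_div' _ (sq_nonneg c), sqrt_sq hc]

end Real

theorem h_strictAnti_and_limit (T ξm : ℝ) (hT : 0 < T) (hξ : 0 < ξm) :
    StrictAntiOn (fun Δ : ℝ =>
        Real.cosh (Real.sqrt (ξm ^ 2 + Δ ^ 2) / (2 * T)) / Real.cosh (Δ / (2 * T)))
      (Set.Ici 0) ∧
    Tendsto (fun Δ : ℝ =>
        Real.cosh (Real.sqrt (ξm ^ 2 + Δ ^ 2) / (2 * T)) / Real.cosh (Δ / (2 * T)))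
      atTop (𝓝 1) := by
  have hc : 0 < 2 * T := by positivity
  have hb : 0 < (ξm / (2 * T)) ^ 2 := by positivity
  have hrescale : (fun Δ : ℝ =>
      Real.cosh (Real.sqrt (ξm ^ 2 + Δ ^ 2) / (2 * T)) / Real.cosh (Δ / (2 * T))) =
      (fun x => Real.cosh √((ξm / (2 * T)) ^ 2 + x ^ 2) / Real.cosh x) ∘ (· / (2 * T)) := by
    ext Δ
    simp only [Function.comp_apply, Real.sqrt_sq_add_sq_div hc.le]
  rw [hrescale]
  refine ⟨(Real.strictAntiOn_cosh_sqrt_add_sq_div_cosh hb).comp_strictMonoOn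
    (fun x _ y _ hxy => div_lt_div_of_pos_right hxy hc)
    (fun x (hx : 0 ≤ x) => div_nonneg hx hc.le), ?_⟩
  exact (Real.tendsto_cosh_sqrt_add_sq_div_cosh hb.le).comp (tendsto_id.atTop_div_const hc)
end

section
/- For 0 < a < b and s > 0, there holds b·(tanh(c) − tanh(b/(2s))) + a·(tanh(a/(2s)) − tanh(c)) < 0 for every c with a/(2s) < c < b/(2s), and consequently 2s·log(cosh(b/(2s))/cosh(a/(2s))) < b·tanh(b/(2s)) − a·tanh(a/(2s)). -/
open Real

theorem Real.tanh_strictMono_s19 : StrictMono tanh := by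
  intro x y hxy
  by_contra! h
  have := artanh_le_artanh (neg_one_lt_tanh y) (tanh_lt_one x) h
  rw [artanh_tanh, artanh_tanh] at this
  exact this.not_gt hxy

theorem sub_mul_tanh_lt_mul_tanh_sub_mul_tanh {a b x c y : ℝ} (ha : 0 ≤ a) (hb : 0 < b)
    (hxc : x ≤ c) (hcy : c < y) : (b - a) * tanh c < b * tanh y - a * tanh x := by
  have hlow : 0 ≤ a * (tanh c - tanh x) :=
    mul_nonneg ha (sub_nonneg.2 (tanh_strictMono_s19.monotone hxc))
  have hhigh : 0 < b * (tanh y - tanh c) := mul_pos hb (sub_pos.2 (tanh_strictMono_s19 hcy))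
  linarith

theorem hasDerivAt_mul_log_cosh_div {r : ℝ} (hr : r ≠ 0) (t : ℝ) :
    HasDerivAt (fun t => r * log (cosh (t / r))) (tanh (t / r)) t := by
  have hlog := ((hasDerivAt_id' t).div_const r).cosh.log (cosh_pos _).ne'
  refine (hlog.const_mul r).congr_deriv ?_
  rw [tanh_eq_sinh_div_cosh]
  field_simp

theorem mvt_tanh_inequality (a b s : ℝ) (ha : 0 < a) (hab : a < b) (hs : 0 < s) :
    (∀ c : ℝ, a / (2 * s) < c → c < b / (2 * s) →
      b * (Real.tanh c - Real.tanh (b / (2 * s)))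
        + a * (Real.tanh (a / (2 * s)) - Real.tanh c) < 0) ∧
    2 * s * Real.log (Real.cosh (b / (2 * s)) / Real.cosh (a / (2 * s)))
      < b * Real.tanh (b / (2 * s)) - a * Real.tanh (a / (2 * s)) := by
  have hr : 0 < 2 * s := by positivity
  have hmid : ∀ c, a / (2 * s) < c → c < b / (2 * s) →
      (b - a) * tanh c < b * tanh (b / (2 * s)) - a * tanh (a / (2 * s)) := fun c hac hcb =>
    sub_mul_tanh_lt_mul_tanh_sub_mul_tanh ha.le (ha.trans hab) hac.le hcb
  refine ⟨fun c hac hcb => by linarith [hmid c hac hcb], ?_⟩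
  have hderiv := hasDerivAt_mul_log_cosh_div hr.ne'
  obtain ⟨c, ⟨hac, hcb⟩, hslope⟩ := exists_hasDerivAt_eq_slope _ _ hab
    (HasDerivAt.continuousOn fun t _ => hderiv t) (fun t _ => hderiv t)
  rw [eq_div_iff (sub_ne_zero.2 hab.ne')] at hslope
  have hc := hmid (c / (2 * s)) (div_lt_div_of_pos_right hac hr) (div_lt_div_of_pos_right hcb hr)
  rw [log_div (cosh_pos _).ne' (cosh_pos _).ne']
  linarith
end
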